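/- (Closed form of I at s = 1) Let x ∈ ℂ∖Γ, z ∈ ℂ and y ∈ ℝ∖{0}. Then I(1, x, z, y) = π Σ_{γ∈Γ} χ(γ + x, z) |γ + x|^{−1} exp(−2π|y||γ + x|); in particular, for every a > 0 and y ≠ 0 one has ∫₀^∞ t^{−1/2} exp(−π²y²/t − t a²) dt = (√π / a) exp(−2π a |y|). -/

import Mathlib

noncomputable section

/-- The lattice Γ = ℤ + τℤ, as a map ℤ × ℤ → ℂ. -/
def lat (τ : ℂ) (p : ℤ × ℤ) : ℂ := (p.1 : ℂ) + (p.2 : ℂ) * τ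

/-- α = Im τ / π. -/
def alf (τ : ℂ) : ℝ := τ.im / Real.pi

/-- The character χ(γ, x) = exp(α⁻¹(γ·conj x − conj γ·x)). -/
def chi (τ γ x : ℂ) : ℂ :=
  Complex.exp (((alf τ)⁻¹ : ℝ) * (γ * (starRingEnd ℂ) x - (starRingEnd ℂ) γ * x))

/-- The heat-kernel series
I(s, x, z, y) = √π Σ_{γ∈Γ} χ(γ+x, z) ∫₀^∞ t^{s−3/2} exp(−π²y²/t − t|γ+x|²) dt. -/
def Iser (τ s x z : ℂ) (y : ℝ) : ℂ :=
  (Real.sqrt Real.pi : ℂ) * ∑' p : ℤ × ℤ, chi τ (lat τ p + x) z *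
    ∫ t in Set.Ioi (0 : ℝ), (t : ℂ) ^ (s - 3 / 2) *
      (Real.exp (-(Real.pi ^ 2 * y ^ 2) / t - t * (‖lat τ p + x‖) ^ 2) : ℂ)

/-!
Every lattice term is the integral `∫₀^∞ t^(-1/2) exp(-c²/t - t a²) dt` with `c = π|y|` and
`a = |γ + x| > 0`. The substitution `t = u²` turns it into
`2 exp(-2ac) ∫₀^∞ exp(-(a u - c/u)²) du`, and the Cauchy–Schlömilch substitution `v = a u - c/u`,
together with the involution `u ↦ c/(a u)` that exchanges `a u - c/u` and `c/u - a u`, evaluates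
the last integral as `√π / (2a)`.
-/

open MeasureTheory Set Real

section CauchySchlomilch

variable {E : Type*} [NormedAddCommGroup E] [NormedSpace ℝ E]

theorem image_div_Ioi {c : ℝ} (hc : 0 < c) : (fun u : ℝ => c / u) '' Ioi 0 = Ioi 0 := by
  refine Subset.antisymm ?_ fun w (hw : 0 < w) => ⟨c / w, div_pos hc hw, div_div_cancel₀ hc.ne'⟩
  rintro _ ⟨u, hu : 0 < u, rfl⟩
  exact div_pos hc hu

theorem integral_comp_div_Ioi (h : ℝ → E) {c : ℝ} (hc : 0 < c) :
    ∫ u in Ioi 0, (c / u ^ 2) • h (c / u) = ∫ u in Ioi 0, h u := by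
  have hderiv : ∀ u ∈ Ioi (0 : ℝ), HasDerivWithinAt (fun u => c / u) (-(c / u ^ 2)) (Ioi 0) u :=
    fun u hu => by
      simpa [div_eq_mul_inv] using ((hasDerivAt_inv (ne_of_gt hu)).const_mul c).hasDerivWithinAt
  have hinj : InjOn (fun u : ℝ => c / u) (Ioi 0) := fun u _ v _ huv =>
    inv_injective (mul_left_cancel₀ hc.ne' (by simpa only [div_eq_mul_inv] using huv))
  conv_rhs => rw [← image_div_Ioi hc,
    integral_image_eq_integral_abs_deriv_smul measurableSet_Ioi hderiv hinj]
  refine setIntegral_congr_fun measurableSet_Ioi fun u (hu : 0 < u) => ?_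
  rw [abs_neg, abs_of_pos (by positivity)]

theorem hasDerivAt_mul_sub_div (a b : ℝ) {u : ℝ} (hu : u ≠ 0) :
    HasDerivAt (fun u : ℝ => a * u - b / u) (a + b / u ^ 2) u := by
  simpa [div_eq_mul_inv] using
    ((hasDerivAt_id u).const_mul a).fun_sub ((hasDerivAt_inv hu).const_mul b)

theorem strictMonoOn_mul_sub_div {a b : ℝ} (ha : 0 < a) (hb : 0 < b) :
    StrictMonoOn (fun u : ℝ => a * u - b / u) (Ioi 0) := fun u (hu : 0 < u) _ _ huv =>
  sub_lt_sub (mul_lt_mul_of_pos_left huv ha) (div_lt_div_of_pos_left hb hu huv)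

theorem image_mul_sub_div_Ioi {a b : ℝ} (ha : 0 < a) (hb : 0 < b) :
    (fun u : ℝ => a * u - b / u) '' Ioi 0 = univ := by
  refine eq_univ_of_forall fun v => ?_
  -- the positive root of `a u² - v u - b = 0`
  set s := √(v ^ 2 + 4 * a * b)
  have hs : s ^ 2 = v ^ 2 + 4 * a * b := sq_sqrt (by positivity)
  have hvs : 0 < v + s := by nlinarith [sqrt_nonneg (v ^ 2 + 4 * a * b)]
  refine ⟨(v + s) / (2 * a), div_pos hvs (by positivity), ?_⟩
  field_simp
  nlinarith

theorem integral_Ioi_comp_mul_sub_div {g : ℝ → E} (hg : Integrable g) {a b : ℝ}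
    (ha : 0 < a) (hb : 0 < b) :
    a • ((∫ u in Ioi 0, g (a * u - b / u)) + ∫ u in Ioi 0, g (b / u - a * u)) = ∫ v, g v := by
  set φ : ℝ → ℝ := fun u => a * u - b / u
  have hderiv : ∀ u ∈ Ioi (0 : ℝ), HasDerivWithinAt φ (a + b / u ^ 2) (Ioi 0) u :=
    fun u hu => (hasDerivAt_mul_sub_div a b (ne_of_gt hu)).hasDerivWithinAt
  have hinj := (strictMonoOn_mul_sub_div ha hb).injOn
  have habs : EqOn (fun u => |a + b / u ^ 2| • g (φ u)) (fun u => (a + b / u ^ 2) • g (φ u))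
      (Ioi 0) := fun u _ => by simp only [abs_of_pos (by positivity : 0 < a + b / u ^ 2)]
  have hF : ∫ v, g v = ∫ u in Ioi 0, (a + b / u ^ 2) • g (φ u) := by
    rw [← setIntegral_univ, ← image_mul_sub_div_Ioi ha hb,
      integral_image_eq_integral_abs_deriv_smul measurableSet_Ioi hderiv hinj,
      setIntegral_congr_fun measurableSet_Ioi habs]
  have hFint : IntegrableOn (fun u => (a + b / u ^ 2) • g (φ u)) (Ioi 0) := by
    rw [← integrableOn_congr_fun habs measurableSet_Ioi,
      ← integrableOn_image_iff_integrableOn_abs_deriv_smul measurableSet_Ioi hderiv hinj,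
      image_mul_sub_div_Ioi ha hb, integrableOn_univ]
    exact hg
  have hBint : IntegrableOn (fun u => (b / u ^ 2) • g (φ u)) (Ioi 0) := by
    have hw : Continuous fun u : ℝ => b / (a * u ^ 2 + b) :=
      continuous_const.div (by fun_prop) fun u => by positivity
    refine IntegrableOn.congr_fun (hFint.bdd_smul 1 hw.aestronglyMeasurable
      (ae_of_all _ fun u => ?_)) (fun u (hu : 0 < u) => ?_) measurableSet_Ioi
    · rw [norm_div, Real.norm_of_nonneg hb.le, Real.norm_of_nonneg (by positivity)]
      exact div_le_one_of_le₀ (by nlinarith [sq_nonneg u]) (by positivity)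
    · simp only [Pi.smul_apply', smul_smul]
      congr 1
      field_simp
  have hAint : IntegrableOn (fun u => a • g (φ u)) (Ioi 0) := by
    simpa only [← sub_smul, add_sub_cancel_right] using hFint.fun_sub hBint
  have hB : ∫ u in Ioi 0, (b / u ^ 2) • g (φ u) = a • ∫ u in Ioi 0, g (b / u - a * u) := by
    rw [← integral_comp_div_Ioi _ (div_pos hb ha), ← integral_smul]
    refine setIntegral_congr_fun measurableSet_Ioi fun u (hu : 0 < u) => ?_
    simp only [φ, smul_smul]
    congr 2 <;> field_simp
  calc a • ((∫ u in Ioi 0, g (φ u)) + ∫ u in Ioi 0, g (b / u - a * u))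
      = (∫ u in Ioi 0, a • g (φ u)) + ∫ u in Ioi 0, (b / u ^ 2) • g (φ u) := by
        rw [smul_add, hB, integral_smul]
    _ = ∫ u in Ioi 0, (a + b / u ^ 2) • g (φ u) := by
        simp only [add_smul]
        exact (integral_add hAint hBint).symm
    _ = ∫ v, g v := hF.symm

end CauchySchlomilch

theorem integral_Ioi_exp_neg_sq_mul_sub_div {a b : ℝ} (ha : 0 < a) (hb : 0 < b) :
    ∫ u in Ioi 0, exp (-(a * u - b / u) ^ 2) = √π / (2 * a) := by
  have h := integral_Ioi_comp_mul_sub_div (g := fun v => exp (-v ^ 2))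
    (by simpa using integrable_exp_neg_mul_sq one_pos) ha hb
  simp only [← neg_sub (a * _), neg_sq, smul_eq_mul] at h
  have hgauss : ∫ v, exp (-v ^ 2) = √π := by simpa using integral_gaussian 1
  rw [eq_div_iff (by positivity), ← hgauss, ← h]
  ring

theorem integral_Ioi_exp_neg_sq_mul_add_div_sq {a b : ℝ} (ha : 0 < a) (hb : 0 ≤ b) :
    ∫ u in Ioi 0, exp (-(a ^ 2 * u ^ 2 + b ^ 2 / u ^ 2)) = √π / (2 * a) * exp (-(2 * a * b)) := by
  rcases hb.eq_or_lt with rfl | hb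
  · have h := integral_gaussian_Ioi (a ^ 2)
    rw [sqrt_div' _ (sq_nonneg a), sqrt_sq ha.le] at h
    simpa [div_div, mul_comm] using h
  · rw [← integral_Ioi_exp_neg_sq_mul_sub_div ha hb, ← integral_mul_const]
    refine setIntegral_congr_fun measurableSet_Ioi fun u (hu : 0 < u) => ?_
    rw [← exp_add]
    congr 1
    field_simp
    ring

theorem integral_Ioi_rpow_neg_half_mul_exp {a c : ℝ} (ha : 0 < a) (hc : 0 ≤ c) :
    ∫ t in Ioi 0, t ^ (-(1 / 2) : ℝ) * exp (-c ^ 2 / t - t * a ^ 2) =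
      √π / a * exp (-(2 * a * c)) := by
  rw [← integral_comp_rpow_Ioi_of_pos two_pos]
  calc ∫ u in Ioi 0, (2 * u ^ ((2 : ℝ) - 1)) • ((u ^ (2 : ℝ)) ^ (-(1 / 2) : ℝ) *
          exp (-c ^ 2 / u ^ (2 : ℝ) - u ^ (2 : ℝ) * a ^ 2))
      = ∫ u in Ioi 0, 2 * exp (-(a ^ 2 * u ^ 2 + c ^ 2 / u ^ 2)) := by
        refine setIntegral_congr_fun measurableSet_Ioi fun u (hu : 0 < u) => ?_
        have hpow : (u ^ (2 : ℝ)) ^ (-(1 / 2) : ℝ) = u⁻¹ := by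
          rw [← rpow_mul hu.le]; norm_num [rpow_neg_one]
        have harg : -c ^ 2 / u ^ 2 - u ^ 2 * a ^ 2 = -(a ^ 2 * u ^ 2 + c ^ 2 / u ^ 2) := by ring
        rw [hpow, rpow_two, harg, smul_eq_mul, show (2 : ℝ) - 1 = 1 by norm_num, rpow_one]
        field_simp
    _ = √π / a * exp (-(2 * a * c)) := by
        rw [integral_const_mul, integral_Ioi_exp_neg_sq_mul_add_div_sq ha hc]
        field_simp

theorem lat_add_ne_zero {τ x : ℂ} (hx : x ∉ range (lat τ)) (p : ℤ × ℤ) : lat τ p + x ≠ 0 := by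
  intro h
  refine hx ⟨-p, ?_⟩
  simp only [lat, Prod.fst_neg, Prod.snd_neg, Int.cast_neg] at h ⊢
  linear_combination -h

theorem integral_Ioi_rpow_neg_half_mul_exp_pi_sq (y : ℝ) {a : ℝ} (ha : 0 < a) :
    ∫ t in Ioi 0, t ^ (-(1 / 2) : ℝ) * exp (-(π ^ 2 * y ^ 2) / t - t * a ^ 2) =
      √π / a * exp (-2 * π * a * |y|) := by
  have h := integral_Ioi_rpow_neg_half_mul_exp ha (by positivity : 0 ≤ π * |y|)
  rwa [mul_pow, sq_abs, show -(2 * a * (π * |y|)) = -2 * π * a * |y| by ring] at h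

theorem integral_ofReal_cpow_neg_half_mul_exp (y : ℝ) {a : ℝ} (ha : 0 < a) :
    ∫ t in Ioi (0 : ℝ), (t : ℂ) ^ ((1 : ℂ) - 3 / 2) *
        (exp (-(π ^ 2 * y ^ 2) / t - t * a ^ 2) : ℂ) =
      ((√π / a * exp (-2 * π * a * |y|) : ℝ) : ℂ) := by
  rw [← integral_Ioi_rpow_neg_half_mul_exp_pi_sq y ha, ← integral_complex_ofReal]
  refine setIntegral_congr_fun measurableSet_Ioi fun t (ht : 0 < t) => ?_
  rw [Complex.ofReal_mul, Complex.ofReal_cpow ht.le]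
  norm_num

theorem Iser_at_one_general (τ : ℂ) (x z : ℂ)
    (hx : x ∉ Set.range (lat τ)) (y : ℝ) :
    Iser τ 1 x z y = (Real.pi : ℂ) * ∑' p : ℤ × ℤ, chi τ (lat τ p + x) z *
        ((‖lat τ p + x‖ : ℝ) : ℂ)⁻¹ *
        (Real.exp (-2 * Real.pi * |y| * ‖lat τ p + x‖) : ℂ) ∧
    ∀ a : ℝ, 0 < a →
      (∫ t in Set.Ioi (0 : ℝ), t ^ (-(1 / 2) : ℝ) *
          Real.exp (-(Real.pi ^ 2 * y ^ 2) / t - t * a ^ 2)) =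
        (Real.sqrt Real.pi / a) * Real.exp (-2 * Real.pi * a * |y|) := by
  refine ⟨?_, fun a ha => integral_Ioi_rpow_neg_half_mul_exp_pi_sq y ha⟩
  rw [Iser, ← tsum_mul_left, ← tsum_mul_left]
  refine tsum_congr fun p => ?_
  rw [integral_ofReal_cpow_neg_half_mul_exp y (norm_pos_iff.2 (lat_add_ne_zero hx p)),
    mul_right_comm _ _ |y|]
  have hpi : (π : ℂ) = √π * √π := by exact_mod_cast (mul_self_sqrt pi_pos.le).symm
  rw [hpi]
  push_cast
  ring

/-- Closed form of I at s = 1: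
I(1, x, z, y) = π Σ_{γ∈Γ} χ(γ+x, z) |γ+x|⁻¹ exp(−2π|y||γ+x|); in particular
∫₀^∞ t^{−1/2} exp(−π²y²/t − ta²) dt = (√π/a) exp(−2πa|y|) for every a > 0. -/
theorem Iser_at_one (τ : ℂ) (hτ : 0 < τ.im) (x z : ℂ)
    (hx : x ∉ Set.range (lat τ)) (y : ℝ) (hy : y ≠ 0) :
    Iser τ 1 x z y = (Real.pi : ℂ) * ∑' p : ℤ × ℤ, chi τ (lat τ p + x) z *
        ((‖lat τ p + x‖ : ℝ) : ℂ)⁻¹ *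
        (Real.exp (-2 * Real.pi * |y| * ‖lat τ p + x‖) : ℂ) ∧
    ∀ a : ℝ, 0 < a →
      (∫ t in Set.Ioi (0 : ℝ), t ^ (-(1 / 2) : ℝ) *
          Real.exp (-(Real.pi ^ 2 * y ^ 2) / t - t * a ^ 2)) =
        (Real.sqrt Real.pi / a) * Real.exp (-2 * Real.pi * a * |y|) :=
  Iser_at_one_general τ x z hx y
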